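/- arXiv:2302.09796 — 2 statements merged into one kernel-verified Lean document; each statement's English description precedes it below -/
import Mathlib

section
/- Suppose the min-weight basis B of X contains x, and x is deleted from X. Then the min-weight basis of X \ {x} is either B \ {x} (if no y ∈ X \ (B ∪ {x}) makes (B \ {x}) ∪ {y} independent), or (B \ {x}) ∪ {y} where y is the minimum-weight element of X \ {x} such that (B \ {x}) ∪ {y} is independent; moreover in the latter case w(y) > w(x). -/
open Finset

/-- A matroid on a finite ground set `E`, given by its independence predicate. -/
structure FinMatroid (α : Type*) [DecidableEq α] where
  E : Finset α
  Indep : Finset α → Prop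
  indep_subset_ground : ∀ ⦃S : Finset α⦄, Indep S → S ⊆ E
  indep_empty : Indep ∅
  indep_mono : ∀ ⦃S T : Finset α⦄, Indep S → T ⊆ S → Indep T
  indep_exchange : ∀ ⦃S T : Finset α⦄, Indep S → Indep T → S.card < T.card →
    ∃ x ∈ T, x ∉ S ∧ Indep (insert x S)

variable {α : Type*} [DecidableEq α]

/-- The rank of a set `X`: the maximum cardinality of an independent subset of `X`. -/
noncomputable def FinMatroid.rank (M : FinMatroid α) (X : Finset α) : ℕ :=
  sSup {n : ℕ | ∃ S : Finset α, M.Indep S ∧ S ⊆ X ∧ S.card = n}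

/-- `S` is a basis of `X`: an independent subset of `X` of size `rank X`. -/
def FinMatroid.IsBasisOf (M : FinMatroid α) (S X : Finset α) : Prop :=
  M.Indep S ∧ S ⊆ X ∧ S.card = M.rank X

/-- `B` is the min-weight basis of `Z` with respect to the weights `w`. -/
def IsMinWeightBasis (M : FinMatroid α) (w : α → ℝ) (Z B : Finset α) : Prop :=
  M.IsBasisOf B Z ∧ ∀ B' : Finset α, M.IsBasisOf B' Z → ∑ x ∈ B, w x ≤ ∑ x ∈ B', w x

/-!
If `y` is the cheapest admissible replacement, `C = B - x + y` is a basis of `X` inside `X \ {x}`,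
so every basis `A` of `X \ {x}` is also a basis of `X`. Symmetric exchange between `B` and `A`
gives `z ∈ A \ B` with both `B - x + z` and `A - z + x` bases of `X`. The first makes `z` an
admissible replacement, so `w y ≤ w z`; the second is no lighter than `B`. Together,
`w(A) ≥ w(B) - w x + w z ≥ w(C)`. When no replacement exists, `B - x` is already a basis of
`X \ {x}`, and every basis of `X \ {x}` extends by `x` to a basis of `X`.
-/

namespace Matroid

variable {α : Type*} {M : Matroid α} {B₁ B₂ : Set α} {e : α}

/-- The element `f` is found in the intersection of the fundamental circuit of `e` with respect
to `B₂` and the fundamental cocircuit of `e` with respect to `B₁`, which cannot be just `{e}`. -/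
theorem IsBase.exists_symm_exchange (hB₁ : M.IsBase B₁) (hB₂ : M.IsBase B₂) (he : e ∈ B₁ \ B₂) :
    ∃ f ∈ B₂ \ B₁, M.IsBase (insert f (B₁ \ {e})) ∧ M.IsBase (insert e (B₂ \ {f})) := by
  have hC := hB₂.fundCircuit_isCircuit (hB₁.subset_ground he.1) he.2
  have hK := M.fundCocircuit_isCocircuit he.1 hB₁
  obtain ⟨f, ⟨hfC, hfK⟩, hfe⟩ : ∃ f ∈ M.fundCircuit e B₂ ∩ M.fundCocircuit e B₁, f ≠ e := by
    by_contra! h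
    exact hC.inter_isCocircuit_ne_singleton hK
      (Set.eq_singleton_iff_unique_mem.2 ⟨⟨M.mem_fundCircuit e B₂, M.mem_fundCocircuit e B₁⟩, h⟩)
  have hfB₁ : f ∉ B₁ :=
    (Set.mem_of_mem_insert_of_ne (M.fundCocircuit_subset_insert_compl e B₁ hfK) hfe).2
  have hfB₂ : f ∈ B₂ := Set.mem_of_mem_insert_of_ne (M.fundCircuit_subset_insert e B₂ hfC) hfe
  rw [hB₁.mem_fundCocircuit_iff_mem_fundCircuit, hB₁.indep.mem_fundCircuit_iff
    (by rw [hB₁.closure_eq]; exact hB₂.subset_ground hfB₂) hfB₁,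
    ← Set.insert_sdiff_singleton_comm hfe] at hfK
  rw [hB₂.indep.mem_fundCircuit_iff (by rw [hB₂.closure_eq]; exact hB₁.subset_ground he.1) he.2,
    ← Set.insert_sdiff_singleton_comm hfe.symm] at hfC
  exact ⟨f, ⟨hfB₂, hfB₁⟩, hB₁.exchange_isBase_of_indep hfB₁ hfK,
    hB₂.exchange_isBase_of_indep he.2 hfC⟩

end Matroid

lemma Finset.sum_insert_erase {ι M : Type*} [DecidableEq ι] [AddCommGroup M] {s : Finset ι}
    {a b : ι} (f : ι → M) (ha : a ∈ s) (hb : b ∉ s) :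
    ∑ i ∈ insert b (s.erase a), f i = ∑ i ∈ s, f i - f a + f b := by
  rw [sum_insert (fun h => hb (mem_of_mem_erase h)), sum_erase_eq_sub ha, add_comm]

namespace FinMatroid

open scoped Matroid

variable {M : FinMatroid α} {S T A B X Y : Finset α} {x z : α}

lemma card_le_rank (hS : M.Indep S) (hSX : S ⊆ X) : S.card ≤ M.rank X :=
  le_csSup ⟨X.card, by rintro _ ⟨T, -, hTX, rfl⟩; exact card_le_card hTX⟩ ⟨S, hS, hSX, rfl⟩

lemma isBasisOf_iff_forall_card_le :
    M.IsBasisOf S X ↔ M.Indep S ∧ S ⊆ X ∧ ∀ T, M.Indep T → T ⊆ X → T.card ≤ S.card := by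
  refine ⟨fun h => ⟨h.1, h.2.1, fun T hT hTX => h.2.2 ▸ card_le_rank hT hTX⟩,
    fun ⟨hS, hSX, hmax⟩ => ⟨hS, hSX, le_antisymm (card_le_rank hS hSX) ?_⟩⟩
  exact csSup_le ⟨_, S, hS, hSX, rfl⟩ (by rintro _ ⟨T, hT, hTX, rfl⟩; exact hmax T hT hTX)

lemma IsBasisOf.card_le (h : M.IsBasisOf S X) (hT : M.Indep T) (hTX : T ⊆ X) :
    T.card ≤ S.card :=
  (isBasisOf_iff_forall_card_le.1 h).2.2 T hT hTX

lemma IsBasisOf.card_eq (hS : M.IsBasisOf S X) (hT : M.IsBasisOf T X) : S.card = T.card :=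
  hS.2.2.trans hT.2.2.symm

lemma IsBasisOf.isBasisOf_subset (h : M.IsBasisOf S X) (hSY : S ⊆ Y) (hYX : Y ⊆ X) :
    M.IsBasisOf S Y :=
  isBasisOf_iff_forall_card_le.2 ⟨h.1, hSY, fun _ hT hTY => h.card_le hT (hTY.trans hYX)⟩

lemma IsBasisOf.exchange_of_indep (hB : M.IsBasisOf B X) (hx : x ∈ B) (hzB : z ∉ B) (hzX : z ∈ X)
    (hind : M.Indep (insert z (B.erase x))) : M.IsBasisOf (insert z (B.erase x)) X := by
  refine ⟨hind, insert_subset hzX ((erase_subset x B).trans hB.2.1), ?_⟩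
  rw [card_insert_of_notMem (fun h => hzB (mem_of_mem_erase h)), card_erase_add_one hx, hB.2.2]

def toMatroid (M : FinMatroid α) : Matroid α :=
  (IndepMatroid.ofFinset M.E M.Indep M.indep_empty (fun _ _ hJ hIJ => M.indep_mono hJ hIJ)
    M.indep_exchange (fun _ hI => by exact_mod_cast M.indep_subset_ground hI)).matroid

@[simp]
lemma toMatroid_indep_coe : M.toMatroid.Indep S ↔ M.Indep S := by
  simp [toMatroid]

lemma IsBasisOf.isBase_restrict (h : M.IsBasisOf S X) : (M.toMatroid ↾ (X : Set α)).IsBase S := by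
  refine Matroid.Indep.isBase_of_maximal (by simpa using ⟨h.1, h.2.1⟩) fun J hJ hSJ => ?_
  rw [Matroid.restrict_indep_iff] at hJ
  lift J to Finset α using X.finite_toSet.subset hJ.2
  norm_cast at hJ hSJ ⊢
  rw [toMatroid_indep_coe] at hJ
  exact eq_of_subset_of_card_le hSJ (h.card_le hJ.1 hJ.2)

lemma IsBasisOf.exists_symm_exchange (hB : M.IsBasisOf B X) (hA : M.IsBasisOf A X)
    (hxB : x ∈ B) (hxA : x ∉ A) : ∃ z ∈ A, z ∉ B ∧
      M.IsBasisOf (insert z (B.erase x)) X ∧ M.IsBasisOf (insert x (A.erase z)) X := by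
  obtain ⟨z, ⟨hzA, hzB⟩, hBz, hAz⟩ :=
    hB.isBase_restrict.exists_symm_exchange hA.isBase_restrict ⟨hxB, hxA⟩
  have hBz := (Matroid.restrict_indep_iff.1 hBz.indep).1
  have hAz := (Matroid.restrict_indep_iff.1 hAz.indep).1
  rw [← coe_erase, ← coe_insert, toMatroid_indep_coe] at hBz hAz
  exact ⟨z, hzA, hzB, hB.exchange_of_indep hxB hzB (hA.2.1 hzA) hBz,
    hA.exchange_of_indep hzA hxA (hB.2.1 hxB) hAz⟩

end FinMatroid

namespace IsMinWeightBasis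

open FinMatroid

variable {M : FinMatroid α} {w : α → ℝ} {X B : Finset α} {x y : α}

lemma erase_of_forall_not_indep (hB : IsMinWeightBasis M w X B) (hx : x ∈ B)
    (hno : ∀ y ∈ X.erase x, y ∉ B → ¬ M.Indep (insert y (B.erase x))) :
    IsMinWeightBasis M w (X.erase x) (B.erase x) := by
  have hBx : M.IsBasisOf (B.erase x) (X.erase x) := by
    refine isBasisOf_iff_forall_card_le.2 ⟨M.indep_mono hB.1.1 (erase_subset x B),
      erase_subset_erase x hB.1.2.1, fun T hT hTX => ?_⟩
    by_contra! hlt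
    obtain ⟨y, hyT, hyB, hind⟩ := M.indep_exchange (M.indep_mono hB.1.1 (erase_subset x B)) hT hlt
    exact hno y (hTX hyT) (fun h => hyB (mem_erase.2 ⟨ne_of_mem_erase (hTX hyT), h⟩)) hind
  refine ⟨hBx, fun A hA => ?_⟩
  obtain ⟨z, hzB, hzA, hAz⟩ :=
    M.indep_exchange hA.1 hB.1.1 (hA.card_eq hBx ▸ card_erase_lt_of_mem hx)
  have hzx : z = x := by
    by_contra hzx
    have := hA.card_le hAz (insert_subset (mem_erase.2 ⟨hzx, hB.1.2.1 hzB⟩) hA.2.1)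
    rw [card_insert_of_notMem hzA] at this
    omega
  rw [hzx] at hzA hAz
  have hAx : M.IsBasisOf (insert x A) X :=
    ⟨hAz, insert_subset (hB.1.2.1 hx) (hA.2.1.trans (erase_subset x X)),
      by rw [card_insert_of_notMem hzA, hA.card_eq hBx, card_erase_add_one hx, hB.1.2.2]⟩
  have hBA := hB.2 _ hAx
  rw [sum_insert hzA] at hBA
  rw [sum_erase_eq_sub hx]
  linarith

lemma weight_lt_of_exchange (hw : Function.Injective w) (hB : IsMinWeightBasis M w X B)
    (hx : x ∈ B) (hyX : y ∈ X) (hyB : y ∉ B) (hind : M.Indep (insert y (B.erase x))) :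
    w x < w y := by
  have hle := hB.2 _ (hB.1.exchange_of_indep hx hyB hyX hind)
  rw [sum_insert_erase w hx hyB] at hle
  exact lt_of_le_of_ne (by linarith) (hw.ne (ne_of_mem_of_not_mem hx hyB))

lemma insert_erase_of_forall_le (hB : IsMinWeightBasis M w X B) (hx : x ∈ B)
    (hyX : y ∈ X.erase x) (hyB : y ∉ B) (hind : M.Indep (insert y (B.erase x)))
    (hmin : ∀ z ∈ X.erase x, z ∉ B → M.Indep (insert z (B.erase x)) → w y ≤ w z) :
    IsMinWeightBasis M w (X.erase x) (insert y (B.erase x)) := by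
  have hC := hB.1.exchange_of_indep hx hyB (mem_of_mem_erase hyX) hind
  have hC' :=
    hC.isBasisOf_subset (insert_subset hyX (erase_subset_erase x hB.1.2.1)) (erase_subset x X)
  refine ⟨hC', fun A hA => ?_⟩
  have hAX : M.IsBasisOf A X :=
    ⟨hA.1, hA.2.1.trans (erase_subset x X), (hA.card_eq hC').trans hC.2.2⟩
  have hxA : x ∉ A := fun h => notMem_erase x X (hA.2.1 h)
  obtain ⟨z, hzA, hzB, hBz, hAz⟩ := hB.1.exists_symm_exchange hAX hx hxA
  have hyz := hmin z (hA.2.1 hzA) hzB hBz.1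
  have hBA := hB.2 _ hAz
  rw [sum_insert_erase w hzA hxA] at hBA
  rw [sum_insert_erase w hx hyB]
  linarith

end IsMinWeightBasis

theorem minweight_basis_delete_general (M : FinMatroid α) (w : α → ℝ)
    (hw : Function.Injective w) (X B : Finset α)
    (hB : IsMinWeightBasis M w X B) (x : α) (hx : x ∈ B) :
    ((¬ ∃ y ∈ X.erase x, y ∉ B ∧ M.Indep (insert y (B.erase x))) →
        IsMinWeightBasis M w (X.erase x) (B.erase x)) ∧
    (∀ y ∈ X.erase x, y ∉ B → M.Indep (insert y (B.erase x)) →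
      (∀ z ∈ X.erase x, z ∉ B → M.Indep (insert z (B.erase x)) → w y ≤ w z) →
      IsMinWeightBasis M w (X.erase x) (insert y (B.erase x)) ∧ w x < w y) :=
  ⟨fun hno => hB.erase_of_forall_not_indep hx fun y hy hyB hind => hno ⟨y, hy, hyB, hind⟩,
    fun _ hy hyB hind hmin => ⟨hB.insert_erase_of_forall_le hx hy hyB hind hmin,
      hB.weight_lt_of_exchange hw hx (mem_of_mem_erase hy) hyB hind⟩⟩

/-- Deleting an element `x` of the min-weight basis `B` of `X`: the new
min-weight basis of `X \ {x}` is `B \ {x}` if no replacement exists, and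
otherwise `(B \ {x}) ∪ {y}` for the minimum-weight replacement `y`, which
moreover satisfies `w y > w x`. -/
theorem minweight_basis_delete (M : FinMatroid α) (w : α → ℝ)
    (hw : Function.Injective w) (X B : Finset α) (hXE : X ⊆ M.E)
    (hB : IsMinWeightBasis M w X B) (x : α) (hx : x ∈ B) :
    ((¬ ∃ y ∈ X.erase x, y ∉ B ∧ M.Indep (insert y (B.erase x))) →
        IsMinWeightBasis M w (X.erase x) (B.erase x)) ∧
    (∀ y ∈ X.erase x, y ∉ B → M.Indep (insert y (B.erase x)) →
      (∀ z ∈ X.erase x, z ∉ B → M.Indep (insert z (B.erase x)) → w y ≤ w z) →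
      IsMinWeightBasis M w (X.erase x) (insert y (B.erase x)) ∧ w x < w y) :=
  minweight_basis_delete_general M w hw X B hB x hx
end

section
/- Let Π ⊆ Π' be augmenting sets in G(S) (componentwise inclusion with equal number of layers). Then Π' \ Π (the componentwise set differences) is an augmenting set in the exchange graph G(S ⊕ Π). -/
open Finset

variable {α : Type*} [DecidableEq α]

/-- Exchange-graph edges between ground-set elements, for a common independent set `S`. -/
def ExchangeEdge (M1 M2 : FinMatroid α) (S : Finset α) (u v : α) : Prop :=
  (u ∈ S ∧ v ∉ S ∧ M1.Indep (insert v (S.erase u))) ∨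
  (u ∉ S ∧ v ∈ S ∧ M2.Indep (insert u (S.erase v)))

/-- An augmenting path in the exchange graph `G(S)`, recorded by its list of
interior vertices (the endpoints `s`, `t` are implicit). -/
def IsAugPath (M1 M2 : FinMatroid α) (S : Finset α) (p : List α) : Prop :=
  ∃ h : p ≠ [],
    p.Nodup ∧ (∀ a ∈ p, a ∈ M1.E) ∧
    p.head h ∉ S ∧ M1.Indep (insert (p.head h) S) ∧
    p.getLast h ∉ S ∧ M2.Indep (insert (p.getLast h) S) ∧
    p.Chain' (ExchangeEdge M1 M2 S)

/-- A walk in `G(S)` starting at (a neighbor of) the source `s`, recorded by its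
list of ground-set vertices. -/
def PathTo (M1 M2 : FinMatroid α) (S : Finset α) (p : List α) : Prop :=
  ∃ h : p ≠ [], p.head h ∉ S ∧ M1.Indep (insert (p.head h) S) ∧
    p.Chain' (ExchangeEdge M1 M2 S)

/-- `u` lies in the distance layer `L_l` of `G(S)`, i.e. `d(s,u) = l`. -/
def InLayer (M1 M2 : FinMatroid α) (S : Finset α) (u : α) (l : ℕ) : Prop :=
  (∃ p : List α, PathTo M1 M2 S p ∧ p.getLast? = some u ∧ p.length = l) ∧
  (∀ p : List α, PathTo M1 M2 S p → p.getLast? = some u → l ≤ p.length)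

/-- The interior of an `(s,t)`-walk in `G(S)` (not necessarily simple). -/
def IsAugSeq (M1 M2 : FinMatroid α) (S : Finset α) (p : List α) : Prop :=
  PathTo M1 M2 S p ∧
  ∃ h : p ≠ [], p.getLast h ∉ S ∧ M2.Indep (insert (p.getLast h) S)

/-- `dt` is the `(s,t)`-distance in `G(S)`: the shortest `(s,t)`-walk has
`dt - 1` interior vertices. -/
def IsDistST (M1 M2 : FinMatroid α) (S : Finset α) (dt : ℕ) : Prop :=
  (∃ p : List α, IsAugSeq M1 M2 S p ∧ p.length + 1 = dt) ∧
  (∀ p : List α, IsAugSeq M1 M2 S p → dt ≤ p.length + 1)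

/-- An augmenting set `(D 1, …, D (dt-1))` in `G(S)` (CLSSW, Definition 24). -/
def IsAugmentingSet (M1 M2 : FinMatroid α) (S : Finset α) (dt : ℕ)
    (D : ℕ → Finset α) : Prop :=
  (∀ l, 1 ≤ l → l < dt → ∀ u ∈ D l, InLayer M1 M2 S u l) ∧
  (∀ l l', 1 ≤ l → l < dt → 1 ≤ l' → l' < dt → (D l).card = (D l').card) ∧
  M1.Indep (S ∪ D 1) ∧
  M2.Indep (S ∪ D (dt - 1)) ∧
  (∀ l, 1 ≤ l → l < dt - 1 → Even l → M1.Indep ((S \ D l) ∪ D (l + 1))) ∧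
  (∀ l, 1 ≤ l → l < dt - 1 → Odd l → M2.Indep ((S \ D (l + 1)) ∪ D l))

/-- The union `D 1 ∪ ⋯ ∪ D (dt - 1)` of the layers of an augmenting set. -/
def AugUnion (dt : ℕ) (D : ℕ → Finset α) : Finset α :=
  (Finset.Icc 1 (dt - 1)).biUnion D

/-!
Write `m = d_t - 1`, `T = S ⊕ Π` and `F l = D' l \ D l`. Everything rests on one spanning
argument. In an augmenting set `C` the even layers `C e ⊆ S` are exchanged against adjacent odd
layers, and the distance layers force each odd layer to be spanned by what is left of `S` once the
even layers nearer to `s` (in `M1`) or to `t` (in `M2`) are removed: otherwise an exchange edge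
would shortcut the layers. Inductively every even layer, hence all of `S`, is spanned by
`S ⊕ C`, which is no larger than the independent set `S ∪ C 1` (resp. `S ∪ C m`) and is
therefore independent.

Applied to the families that agree with `Π'` on the layers `{e, e ± 1}` (or `{1}`, or `{m}`) and
with `Π` elsewhere, this gives the exchange conditions of `F` in `G(T)`. They produce exchange
edges of `G(T)` from `F (l - 1)` into `F l`, so `F l` lies within distance `l` of `s`.
Conversely, the same spanning facts show that an edge of `G(T)` from a vertex at distance
`j < m` in `G(S)` leads to one at distance at most `j + 1` in `G(S)`. So distances from `s` up
to `m` do not decrease from `G(S)` to `G(T)`, and `F l` lies in the layer `l` of `G(T)`.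
-/

namespace FinMatroid

variable {M : FinMatroid α} {I J X Y W : Finset α} {e : α}

theorem rank_bddAbove (M : FinMatroid α) (X : Finset α) :
    BddAbove {n : ℕ | ∃ S : Finset α, M.Indep S ∧ S ⊆ X ∧ S.card = n} := by
  refine ⟨X.card, ?_⟩
  rintro n ⟨S, -, hSX, rfl⟩
  exact card_le_card hSX

theorem exists_indep_subset_card_eq_rank (M : FinMatroid α) (X : Finset α) :
    ∃ B, M.Indep B ∧ B ⊆ X ∧ B.card = M.rank X :=
  Nat.sSup_mem (s := {n | ∃ S, M.Indep S ∧ S ⊆ X ∧ S.card = n})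
    ⟨0, ∅, M.indep_empty, empty_subset X, card_empty⟩ (M.rank_bddAbove X)

theorem Indep.card_le_rank (hI : M.Indep I) (hIX : I ⊆ X) : I.card ≤ M.rank X :=
  le_csSup (M.rank_bddAbove X) ⟨I, hI, hIX, rfl⟩

theorem rank_mono (hXY : X ⊆ Y) : M.rank X ≤ M.rank Y := by
  obtain ⟨B, hB, hBX, hcard⟩ := M.exists_indep_subset_card_eq_rank X
  exact hcard ▸ hB.card_le_rank (hBX.trans hXY)

theorem Indep.rank_eq (hX : M.Indep X) : M.rank X = X.card := by
  obtain ⟨B, -, hBX, hcard⟩ := M.exists_indep_subset_card_eq_rank X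
  exact le_antisymm (hcard ▸ card_le_card hBX) (hX.card_le_rank subset_rfl)

theorem indep_of_card_le_rank (h : X.card ≤ M.rank X) : M.Indep X := by
  obtain ⟨B, hB, hBX, hcard⟩ := M.exists_indep_subset_card_eq_rank X
  rwa [← eq_of_subset_of_card_le hBX (hcard ▸ h)]

theorem Indep.exists_superset_card_eq (hI : M.Indep I) (hJ : M.Indep J)
    (hIJ : I.card ≤ J.card) : ∃ B, M.Indep B ∧ I ⊆ B ∧ B ⊆ I ∪ J ∧ B.card = J.card := by
  induction h : J.card - I.card generalizing I with
  | zero => exact ⟨I, hI, subset_rfl, subset_union_left, by omega⟩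
  | succ n ih =>
    obtain ⟨x, hxJ, hxI, hxI'⟩ := M.indep_exchange hI hJ (by omega)
    have hcard := card_insert_of_notMem hxI
    obtain ⟨B, hB, hIB, hBIJ, hBcard⟩ := ih hxI' (by omega) (by omega)
    refine ⟨B, hB, (subset_insert x I).trans hIB, hBIJ.trans ?_, hBcard⟩
    rw [insert_union]
    exact insert_subset (mem_union_right I hxJ) subset_rfl

theorem Indep.exists_superset_card_eq_rank (hI : M.Indep I) (hIX : I ⊆ X) :
    ∃ B, M.Indep B ∧ I ⊆ B ∧ B ⊆ X ∧ B.card = M.rank X := by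
  obtain ⟨B₀, hB₀, hB₀X, hcard⟩ := M.exists_indep_subset_card_eq_rank X
  obtain ⟨B, hB, hIB, hBIB₀, hBcard⟩ := hI.exists_superset_card_eq hB₀ (hcard ▸ hI.card_le_rank hIX)
  exact ⟨B, hB, hIB, hBIB₀.trans (union_subset hIX hB₀X), hBcard.trans hcard⟩

theorem Indep.indep_insert_or_exists_erase {S : Finset α} {w : α} (hS : M.Indep S) (hw : w ∉ S)
    (hXS : X ⊆ S) (hX : M.Indep (insert w X)) :
    M.Indep (insert w S) ∨ ∃ x ∈ S \ X, M.Indep (insert w (S.erase x)) := by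
  by_cases hXeq : X = S
  · exact Or.inl (hXeq ▸ hX)
  right
  have hlt := card_lt_card (ssubset_of_subset_of_ne hXS hXeq)
  obtain ⟨B, hB, hXB, hBXS, hBcard⟩ := hX.exists_superset_card_eq hS
    (by rw [card_insert_of_notMem fun h => hw (hXS h)]; omega)
  have hBwS : B ⊆ insert w S := hBXS.trans (by rw [insert_union, union_eq_right.2 hXS])
  obtain ⟨x, hxS, hxB⟩ : ∃ x ∈ S, x ∉ B := by
    by_contra! hSB
    have := card_le_card (insert_subset (hXB (mem_insert_self w X)) hSB)
    rw [card_insert_of_notMem hw] at this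
    omega
  have hBsub : B ⊆ insert w (S.erase x) := fun y hy => by
    rcases mem_insert.1 (hBwS hy) with rfl | hyS
    · exact mem_insert_self y _
    · exact mem_insert_of_mem (mem_erase.2 ⟨fun h => hxB (h ▸ hy), hyS⟩)
  refine ⟨x, mem_sdiff.2 ⟨hxS, fun h => hxB (hXB (mem_insert_of_mem h))⟩, ?_⟩
  rwa [← eq_of_subset_of_card_le hBsub (by
    rw [card_insert_of_notMem (fun h => hw (mem_of_mem_erase h)), card_erase_of_mem hxS]; omega)]

def Spans (M : FinMatroid α) (X : Finset α) (e : α) : Prop :=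
  M.rank (insert e X) = M.rank X

theorem spans_of_mem (M : FinMatroid α) (h : e ∈ X) : M.Spans X e := by
  rw [Spans, insert_eq_of_mem h]

theorem Indep.spans_of_not_indep_insert (hX : M.Indep X) (h : ¬ M.Indep (insert e X)) :
    M.Spans X e := by
  refine le_antisymm ?_ (rank_mono (subset_insert e X))
  by_contra! hlt
  exact h (indep_of_card_le_rank (by
    have := card_insert_le e X
    rw [hX.rank_eq] at hlt; omega))

theorem Spans.not_indep_insert (h : M.Spans X e) (hX : M.Indep X) (he : e ∉ X) :
    ¬ M.Indep (insert e X) := fun hi => by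
  have := hi.rank_eq
  rw [Spans, hX.rank_eq, card_insert_of_notMem he] at *
  omega

theorem Spans.mono (h : M.Spans X e) (hXY : X ⊆ Y) : M.Spans Y e := by
  by_cases heY : e ∈ Y
  · exact M.spans_of_mem heY
  obtain ⟨B, hB, hBX, hBcard⟩ := M.exists_indep_subset_card_eq_rank X
  obtain ⟨B', hB', hBB', hB'Y, hB'card⟩ := hB.exists_superset_card_eq_rank (hBX.trans hXY)
  obtain ⟨B'', hB'', hB''Y, hB''card⟩ := M.exists_indep_subset_card_eq_rank (insert e Y)
  refine le_antisymm ?_ (rank_mono (subset_insert e Y))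
  by_contra! hlt
  obtain ⟨x, hxB'', hxB', hx⟩ := M.indep_exchange hB' hB'' (by omega)
  rcases mem_insert.1 (hB''Y hxB'') with rfl | hxY
  · -- `insert x B` would be an independent subset of `insert x X` larger than `rank X`
    have := (M.indep_mono hx (insert_subset_insert x hBB')).card_le_rank
      (insert_subset_insert x hBX)
    rw [card_insert_of_notMem fun h => hxB' (hBB' h)] at this
    rw [Spans] at h
    omega
  · have := hx.card_le_rank (insert_subset hxY hB'Y)
    rw [card_insert_of_notMem hxB'] at this
    omega

theorem rank_union_eq_of_spans (h : ∀ y ∈ Y, M.Spans X y) : M.rank (X ∪ Y) = M.rank X := by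
  induction Y using Finset.induction with
  | empty => rw [union_empty]
  | insert y Y _ ih =>
    rw [union_insert]
    rw [← ih fun z hz => h z (mem_insert_of_mem hz)]
    exact (h y (mem_insert_self y Y)).mono subset_union_left

theorem Spans.trans (h : M.Spans X e) (hX : ∀ x ∈ X, M.Spans W x) : M.Spans W e := by
  have hWX : M.Spans (W ∪ X) e := h.mono subset_union_right
  refine le_antisymm ?_ (rank_mono (subset_insert e W))
  calc M.rank (insert e W) ≤ M.rank (insert e (W ∪ X)) :=
        rank_mono (insert_subset_insert e subset_union_left)
    _ = M.rank W := by rw [hWX, rank_union_eq_of_spans hX]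

theorem Indep.spans_of_rank_union_le {A : Finset α} (hW : M.Indep W)
    (h : M.rank (W ∪ A) ≤ W.card) : ∀ u ∈ A, M.Spans W u := fun u hu =>
  le_antisymm ((rank_mono (insert_subset (mem_union_right W hu) subset_union_left)).trans
    (h.trans hW.rank_eq.ge)) (rank_mono (subset_insert u W))

theorem Indep.indep_of_spans_of_card_le (hJ : M.Indep J) (h : ∀ x ∈ J, M.Spans X x)
    (hcard : X.card ≤ J.card) : M.Indep X := by
  refine indep_of_card_le_rank ?_
  calc X.card ≤ J.card := hcard
    _ = M.rank J := hJ.rank_eq.symm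
    _ ≤ M.rank (X ∪ J) := rank_mono subset_union_right
    _ = M.rank X := rank_union_eq_of_spans h

theorem Indep.spans_sdiff_union {L A B : Finset α} (hL : M.Indep L) (hAL : A ⊆ L)
    (hBL : Disjoint B L) (hcard : A.card ≤ B.card) (hi : M.Indep ((L \ A) ∪ B))
    (hspan : ∀ y ∈ B, M.Spans L y) : ∀ u ∈ A, M.Spans ((L \ A) ∪ B) u := by
  refine hi.spans_of_rank_union_le ?_
  calc M.rank (((L \ A) ∪ B) ∪ A) ≤ M.rank (L ∪ B) := rank_mono (by
        intro x; simp only [mem_union, mem_sdiff]; have := @hAL x; tauto)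
    _ = L.card := by rw [rank_union_eq_of_spans hspan, hL.rank_eq]
    _ ≤ ((L \ A) ∪ B).card := by
      rw [card_union_of_disjoint (disjoint_of_subset_left sdiff_subset hBL.symm),
        card_sdiff_of_subset hAL]
      have := card_le_card hAL
      omega

/-- Induction from the last block: `A i` is spanned by `(L \ A i) ∪ B i`, where `L` is what is
left of `S` before `A i` is exchanged, and every element of that set lies in `T` or in a later
block. -/
theorem spans_of_exchange_chain {ι : Type*} (r : ι → ι → Prop) [IsStrictTotalOrder ι r]
    [DecidableRel r] {S T : Finset α} {I : Finset ι} {A B : ι → Finset α} (hS : M.Indep S)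
    (hAS : ∀ i ∈ I, A i ⊆ S) (hAA : ∀ i ∈ I, ∀ j ∈ I, r j i → Disjoint (A i) (A j))
    (hBS : ∀ i ∈ I, Disjoint (B i) S) (hcard : ∀ i ∈ I, (A i).card ≤ (B i).card)
    (hindep : ∀ i ∈ I, M.Indep ((S \ A i) ∪ B i))
    (hspan : ∀ i ∈ I, ∀ y ∈ B i, M.Spans (S \ (I.filter (r · i)).biUnion A) y)
    (hBT : ∀ i ∈ I, B i ⊆ T) (hST : S \ I.biUnion A ⊆ T) :
    ∀ i ∈ I, ∀ u ∈ A i, M.Spans T u := by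
  intro i hi
  induction hn : (I.filter (r i ·)).card using Nat.strong_induction_on generalizing i with
  | _ n ih =>
  set L := S \ (I.filter (r · i)).biUnion A
  have hAL : A i ⊆ L := fun x hx => mem_sdiff.2 ⟨hAS i hi hx, by
    simp only [mem_biUnion, mem_filter, not_exists, not_and]
    exact fun j ⟨hj, hji⟩ hxj => disjoint_left.1 (hAA i hi j hj hji) hx hxj⟩
  intro u hu
  refine ((M.indep_mono hS sdiff_subset).spans_sdiff_union hAL
    (disjoint_of_subset_right sdiff_subset (hBS i hi)) (hcard i hi)
    (M.indep_mono (hindep i hi) (union_subset_union (sdiff_subset_sdiff sdiff_subset subset_rfl)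
      subset_rfl)) (hspan i hi) u hu).trans fun x hx => ?_
  rcases mem_union.1 hx with hx | hx
  · obtain ⟨hxL, hxi⟩ := mem_sdiff.1 hx
    by_cases hxA : ∃ j ∈ I, x ∈ A j
    · obtain ⟨j, hj, hxj⟩ := hxA
      have hij : r i j := by
        rcases trichotomous_of r i j with h | rfl | hji
        · exact h
        · exact absurd hxj hxi
        · exact absurd (mem_biUnion.2 ⟨j, mem_filter.2 ⟨hj, hji⟩, hxj⟩) (mem_sdiff.1 hxL).2
      refine ih _ (hn ▸ card_lt_card ?_) j hj rfl x hxj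
      refine ⟨fun k hk => ?_, not_subset.2 ⟨j, by simp [hj, hij], by simp [irrefl_of r j]⟩⟩
      simp only [mem_filter] at hk ⊢
      exact ⟨hk.1, trans_of r hij hk.2⟩
    · exact M.spans_of_mem (hST (mem_sdiff.2 ⟨(mem_sdiff.1 hxL).1, by simpa using hxA⟩))
  · exact M.spans_of_mem (hBT i hi hx)

end FinMatroid

section ExchangeGraph

variable {M1 M2 : FinMatroid α} {S X : Finset α} {p q : List α} {a v w x : α} {dt j l n : ℕ}

/-- `d(s, x) ≤ n` in `G(S)`. -/
def ReachWithin (M1 M2 : FinMatroid α) (S : Finset α) (x : α) (n : ℕ) : Prop :=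
  ∃ p, PathTo M1 M2 S p ∧ p.getLast? = some x ∧ p.length ≤ n

theorem pathTo_singleton (hw : w ∉ S) (hi : M1.Indep (insert w S)) : PathTo M1 M2 S [w] :=
  ⟨List.cons_ne_nil w [], hw, hi, List.isChain_singleton w⟩

theorem PathTo.append_singleton (hp : PathTo M1 M2 S p) (hv : p.getLast? = some v)
    (he : ExchangeEdge M1 M2 S v w) : PathTo M1 M2 S (p ++ [w]) := by
  obtain ⟨hne, hhead, hi, hchain⟩ := hp
  refine ⟨by simp, ?_, ?_, List.isChain_append.2 ⟨hchain, List.isChain_singleton w, ?_⟩⟩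
  · rwa [List.head_append_of_ne_nil hne]
  · rwa [List.head_append_of_ne_nil hne]
  · simp [hv, he]

theorem PathTo.cases_append_singleton (h : PathTo M1 M2 S (q ++ [w])) :
    (q = [] ∧ w ∉ S ∧ M1.Indep (insert w S)) ∨
      ∃ v, PathTo M1 M2 S q ∧ q.getLast? = some v ∧ ExchangeEdge M1 M2 S v w := by
  obtain ⟨hne, hhead, hi, hchain⟩ := h
  obtain ⟨hq, -, hedge⟩ := List.isChain_append.1 hchain
  cases q with
  | nil => exact Or.inl ⟨rfl, hhead, hi⟩
  | cons c q =>
    rw [List.head_append_of_ne_nil (List.cons_ne_nil c q)] at hhead hi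
    obtain ⟨v, hv⟩ := Option.isSome_iff_exists.1 (List.getLast?_isSome.2 (List.cons_ne_nil c q))
    exact Or.inr ⟨v, ⟨List.cons_ne_nil c q, hhead, hi, hq⟩, hv, hedge v hv w rfl⟩

theorem PathTo.mem_iff_even (hp : PathTo M1 M2 S p) (hx : p.getLast? = some x) :
    x ∈ S ↔ Even p.length := by
  induction p using List.reverseRecOn generalizing x with
  | nil => simp at hx
  | append_singleton q w ih =>
    obtain rfl : w = x := by simpa using hx
    rcases hp.cases_append_singleton with ⟨rfl, hw, -⟩ | ⟨v, hq, hv, he⟩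
    · simpa using hw
    · have := ih hq hv
      rw [List.length_append, List.length_singleton, Nat.even_add_one]
      rcases he with ⟨hv, hw, -⟩ | ⟨hv, hw, -⟩ <;> tauto

theorem reachWithin_one (hw : w ∉ S) (hi : M1.Indep (insert w S)) : ReachWithin M1 M2 S w 1 :=
  ⟨[w], pathTo_singleton hw hi, rfl, le_rfl⟩

theorem not_reachWithin_zero : ¬ ReachWithin M1 M2 S x 0 := by
  rintro ⟨p, hp, -, hlen⟩
  exact hp.1 (List.eq_nil_of_length_eq_zero (Nat.le_zero.1 hlen))

theorem ReachWithin.mono (h : ReachWithin M1 M2 S x n) (hnm : n ≤ j) : ReachWithin M1 M2 S x j :=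
  let ⟨p, hp, hx, hlen⟩ := h; ⟨p, hp, hx, hlen.trans hnm⟩

theorem ReachWithin.step (h : ReachWithin M1 M2 S v n) (he : ExchangeEdge M1 M2 S v w) :
    ReachWithin M1 M2 S w (n + 1) :=
  let ⟨p, hp, hv, hlen⟩ := h
  ⟨p ++ [w], hp.append_singleton hv he, List.getLast?_concat, by simpa using hlen⟩

theorem ReachWithin.cases (h : ReachWithin M1 M2 S w (n + 1)) :
    (w ∉ S ∧ M1.Indep (insert w S)) ∨ ∃ v, ReachWithin M1 M2 S v n ∧ ExchangeEdge M1 M2 S v w := by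
  obtain ⟨p, hp, hw, hlen⟩ := h
  obtain ⟨q, rfl⟩ := List.getLast?_eq_some_iff.1 hw
  rcases hp.cases_append_singleton with ⟨-, hw, hi⟩ | ⟨v, hq, hv, he⟩
  · exact Or.inl ⟨hw, hi⟩
  · exact Or.inr ⟨v, ⟨q, hq, hv, by simpa using hlen⟩, he⟩

theorem inLayer_iff : InLayer M1 M2 S x l ↔
    ReachWithin M1 M2 S x l ∧ ∀ n, ReachWithin M1 M2 S x n → l ≤ n := by
  constructor
  · rintro ⟨⟨p, hp, hx, hlen⟩, hmin⟩
    exact ⟨⟨p, hp, hx, hlen.le⟩, fun n ⟨q, hq, hqx, hqlen⟩ => (hmin q hq hqx).trans hqlen⟩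
  · rintro ⟨⟨p, hp, hx, hlen⟩, hmin⟩
    have hmin' : ∀ q, PathTo M1 M2 S q → q.getLast? = some x → l ≤ q.length :=
      fun q hq hqx => hmin _ ⟨q, hq, hqx, le_rfl⟩
    exact ⟨⟨p, hp, hx, le_antisymm hlen (hmin' p hp hx)⟩, hmin'⟩

theorem InLayer.mem_iff_even (h : InLayer M1 M2 S x l) : x ∈ S ↔ Even l := by
  obtain ⟨⟨p, hp, hx, rfl⟩, -⟩ := h
  exact hp.mem_iff_even hx

theorem InLayer.eq (h : InLayer M1 M2 S x l) (h' : InLayer M1 M2 S x n) : l = n :=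
  le_antisymm ((inLayer_iff.1 h).2 n (inLayer_iff.1 h').1)
    ((inLayer_iff.1 h').2 l (inLayer_iff.1 h).1)

theorem IsDistST.le_of_reachWithin (hdt : IsDistST M1 M2 S dt) (h : ReachWithin M1 M2 S a j)
    (ha : a ∉ S) (hi : M2.Indep (insert a S)) : dt ≤ j + 1 := by
  obtain ⟨p, hp, hx, hlen⟩ := h
  have hlast : p.getLast hp.1 = a := by simpa [List.getLast?_eq_some_getLast hp.1] using hx
  have := hdt.2 p ⟨hp, hp.1, hlast ▸ ha, hlast ▸ hi⟩
  omega

theorem IsDistST.exists_odd (hdt : IsDistST M1 M2 S dt) : ∃ m, dt = m + 1 ∧ Odd m := by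
  obtain ⟨⟨p, ⟨hp, hne, hlast, -⟩, rfl⟩, -⟩ := hdt
  refine ⟨p.length, rfl, Nat.not_even_iff_odd.1 fun h => hlast ?_⟩
  exact (hp.mem_iff_even (List.getLast?_eq_some_getLast hne)).2 h

theorem indep_insert_or_exists_edge_one (hS1 : M1.Indep S) (hw : w ∉ S) (hXS : X ⊆ S)
    (hi : M1.Indep (insert w X)) :
    M1.Indep (insert w S) ∨ ∃ x ∈ S \ X, ExchangeEdge M1 M2 S x w :=
  (hS1.indep_insert_or_exists_erase hw hXS hi).imp_right fun ⟨x, hx, hxw⟩ =>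
    ⟨x, hx, Or.inl ⟨(mem_sdiff.1 hx).1, hw, hxw⟩⟩

theorem indep_insert_or_exists_edge_two (hS2 : M2.Indep S) (hw : w ∉ S) (hXS : X ⊆ S)
    (hi : M2.Indep (insert w X)) :
    M2.Indep (insert w S) ∨ ∃ x ∈ S \ X, ExchangeEdge M1 M2 S w x :=
  (hS2.indep_insert_or_exists_erase hw hXS hi).imp_right fun ⟨x, hx, hxw⟩ =>
    ⟨x, hx, Or.inr ⟨hw, (mem_sdiff.1 hx).1, hxw⟩⟩

theorem exists_edge_of_indep_sdiff_union {A B : Finset α} (hS2 : M2.Indep S) (hwA : w ∈ A)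
    (hAS : A ⊆ S) (hBS : Disjoint B S) (hcard : A.card ≤ B.card) (hi : M2.Indep ((S \ A) ∪ B)) :
    ∃ x ∈ B, ExchangeEdge M1 M2 S x w := by
  obtain ⟨x, hxY, hxS, hxi⟩ := M2.indep_exchange (M2.indep_mono hS2 (erase_subset w S)) hi (by
    rw [card_union_of_disjoint (disjoint_of_subset_left sdiff_subset hBS.symm),
      card_sdiff_of_subset hAS, card_erase_of_mem (hAS hwA)]
    have := card_le_card hAS
    have := card_pos.2 ⟨w, hwA⟩
    omega)
  have hxB : x ∈ B := (mem_union.1 hxY).resolve_left fun h =>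
    hxS (mem_erase.2 ⟨fun hxw => (mem_sdiff.1 h).2 (hxw ▸ hwA), (mem_sdiff.1 h).1⟩)
  exact ⟨x, hxB, Or.inr ⟨disjoint_left.1 hBS hxB, hAS hwA, hxi⟩⟩

/-- Otherwise `w` would receive an `M1`-exchange edge from `s` or from an element of `S \ X`. -/
theorem spans_of_not_reachWithin (hS1 : M1.Indep S) (hw : w ∉ S)
    (hw' : ¬ ReachWithin M1 M2 S w (j + 1)) (hXS : X ⊆ S)
    (hX : ∀ x ∈ S \ X, ReachWithin M1 M2 S x j) : M1.Spans X w := by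
  refine not_not.1 fun hspan => ?_
  have hi : M1.Indep (insert w X) :=
    not_not.1 fun h => hspan ((M1.indep_mono hS1 hXS).spans_of_not_indep_insert h)
  rcases indep_insert_or_exists_edge_one hS1 hw hXS hi with h | ⟨x, hx, he⟩
  · exact hw' ((reachWithin_one hw h).mono (by omega))
  · exact hw' ((hX x hx).step he)

/-- Otherwise `a` would send an `M2`-exchange edge to `t` or to an element of `S \ X`. -/
theorem spans_of_reachWithin (hS2 : M2.Indep S) (hdt : IsDistST M1 M2 S dt) (ha : a ∉ S)
    (ha' : ReachWithin M1 M2 S a j) (hj : j + 1 < dt) (hXS : X ⊆ S)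
    (hX : ∀ x ∈ S \ X, ¬ ReachWithin M1 M2 S x (j + 1)) : M2.Spans X a := by
  refine not_not.1 fun hspan => ?_
  have hi : M2.Indep (insert a X) :=
    not_not.1 fun h => hspan ((M2.indep_mono hS2 hXS).spans_of_not_indep_insert h)
  rcases indep_insert_or_exists_edge_two hS2 ha hXS hi with h | ⟨x, hx, he⟩
  · have := hdt.le_of_reachWithin ha' ha h
    omega
  · exact hX x hx (ha'.step he)

end ExchangeGraph

section Layers

variable {M1 M2 : FinMatroid α} {S T : Finset α} {m j l l' : ℕ} {u x : α}
  {C D D' F : ℕ → Finset α}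

def IsLayered (M1 M2 : FinMatroid α) (S : Finset α) (m : ℕ) (C : ℕ → Finset α) : Prop :=
  ∀ l, 1 ≤ l → l ≤ m → ∀ u ∈ C l, InLayer M1 M2 S u l

/-- The exchange conditions of an augmenting set at its even layers `e`, with `f e = e + 1` for
`M1` and `f e = e - 1` for `M2`. -/
def ExchangePairs (M : FinMatroid α) (S : Finset α) (m : ℕ) (f : ℕ → ℕ) (C : ℕ → Finset α) :
    Prop :=
  ∀ e, Even e → 2 ≤ e → e < m → (C e).card = (C (f e)).card ∧ M.Indep ((S \ C e) ∪ C (f e))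

def evenUnion (m : ℕ) (C : ℕ → Finset α) : Finset α := ((Icc 1 m).filter Even).biUnion C

def oddUnion (m : ℕ) (C : ℕ → Finset α) : Finset α := ((Icc 1 m).filter Odd).biUnion C

/-- `S ⊕ (C 1 ∪ ⋯ ∪ C m)` for a layered family `C`, whose even layers lie in `S` and whose odd
layers lie outside it. -/
def augment (S : Finset α) (m : ℕ) (C : ℕ → Finset α) : Finset α :=
  (S \ evenUnion m C) ∪ oddUnion m C

theorem mem_evenUnion : x ∈ evenUnion m C ↔ ∃ l, (1 ≤ l ∧ l ≤ m) ∧ Even l ∧ x ∈ C l := by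
  simp [evenUnion, and_assoc]

theorem mem_oddUnion : x ∈ oddUnion m C ↔ ∃ l, (1 ≤ l ∧ l ≤ m) ∧ Odd l ∧ x ∈ C l := by
  simp [oddUnion, and_assoc]

theorem mem_augment_of_odd {l : ℕ} (hl : 1 ≤ l) (hlm : l ≤ m) (hu : u ∈ C l) (ho : Odd l) :
    u ∈ augment S m C :=
  mem_union_right _ (mem_oddUnion.2 ⟨l, ⟨hl, hlm⟩, ho, hu⟩)

theorem exists_mem_of_notMem_augment (hx : x ∈ S) (hxT : x ∉ augment S m C) :
    ∃ e, (1 ≤ e ∧ e ≤ m) ∧ Even e ∧ x ∈ C e :=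
  mem_evenUnion.1 (by_contra fun h => hxT (mem_union_left _ (mem_sdiff.2 ⟨hx, h⟩)))

theorem filter_sdiff_biUnion_subset_augment {Q : α → Prop} [DecidablePred Q] {I : Finset ℕ}
    (hI : ∀ l, 1 ≤ l → l ≤ m → Even l → l ∉ I → ∀ u ∈ C l, ¬ Q u) :
    S.filter Q \ I.biUnion C ⊆ (augment S m C).filter Q := by
  intro z hz
  simp only [mem_sdiff, mem_filter, mem_biUnion, not_exists, not_and] at hz
  refine mem_filter.2 ⟨mem_union_left _ (mem_sdiff.2 ⟨hz.1.1, fun hzE => ?_⟩), hz.1.2⟩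
  obtain ⟨l, ⟨hl1, hlm⟩, hl, hzl⟩ := mem_evenUnion.1 hzE
  by_cases hlI : l ∈ I
  · exact hz.2 l hlI hzl
  · exact hI l hl1 hlm hl hlI z hzl hz.1.2

theorem augment_sdiff_union_subset (hsub : ∀ l, D l ⊆ D' l) {P : Finset ℕ} {X : Finset α}
    {b : ℕ} (hX : ∀ l ∈ P, Even l → D' l \ D l ⊆ X) (hb : b ∈ P) (hb1 : 1 ≤ b) (hbm : b ≤ m)
    (hbo : Odd b) : (augment S m D \ X) ∪ (D' b \ D b) ⊆ augment S m (P.piecewise D' D) := by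
  intro x hx
  rcases mem_union.1 hx with hx | hx
  · obtain ⟨hxT, hxX⟩ := mem_sdiff.1 hx
    rcases mem_union.1 hxT with hx | hx
    · obtain ⟨hxS, hxE⟩ := mem_sdiff.1 hx
      refine mem_union_left _ (mem_sdiff.2 ⟨hxS, fun h => ?_⟩)
      obtain ⟨l, hl, hle, hxl⟩ := mem_evenUnion.1 h
      have hxl' : x ∉ D l := fun h => hxE (mem_evenUnion.2 ⟨l, hl, hle, h⟩)
      by_cases hlP : l ∈ P
      · rw [piecewise_eq_of_mem _ _ _ hlP] at hxl
        exact hxX (hX l hlP hle (mem_sdiff.2 ⟨hxl, hxl'⟩))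
      · rw [piecewise_eq_of_notMem _ _ _ hlP] at hxl
        exact hxl' hxl
    · obtain ⟨l, hl, hlo, hxl⟩ := mem_oddUnion.1 hx
      refine mem_union_right _ (mem_oddUnion.2 ⟨l, hl, hlo, ?_⟩)
      by_cases hlP : l ∈ P
      · rw [piecewise_eq_of_mem _ _ _ hlP]; exact hsub l hxl
      · rwa [piecewise_eq_of_notMem _ _ _ hlP]
  · refine mem_augment_of_odd hb1 hbm ?_ hbo
    rw [piecewise_eq_of_mem _ _ _ hb]
    exact (mem_sdiff.1 hx).1

namespace IsLayered

variable (hC : IsLayered M1 M2 S m C)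
include hC

theorem reachWithin (hl : 1 ≤ l) (hlm : l ≤ m) (hu : u ∈ C l) : ReachWithin M1 M2 S u l :=
  (inLayer_iff.1 (hC l hl hlm u hu)).1

theorem le_of_reachWithin (hl : 1 ≤ l) (hlm : l ≤ m) (hu : u ∈ C l)
    (h : ReachWithin M1 M2 S u j) : l ≤ j :=
  (inLayer_iff.1 (hC l hl hlm u hu)).2 j h

theorem mem_iff_even (hl : 1 ≤ l) (hlm : l ≤ m) (hu : u ∈ C l) : u ∈ S ↔ Even l :=
  (hC l hl hlm u hu).mem_iff_even

theorem eq_of_mem (hl : 1 ≤ l) (hlm : l ≤ m) (hl' : 1 ≤ l') (hlm' : l' ≤ m) (hu : u ∈ C l)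
    (hu' : u ∈ C l') : l = l' :=
  (hC l hl hlm u hu).eq (hC l' hl' hlm' u hu')

theorem disjoint_of_ne (hl : 1 ≤ l) (hlm : l ≤ m) (hl' : 1 ≤ l') (hlm' : l' ≤ m) (hne : l ≠ l') :
    Disjoint (C l) (C l') :=
  disjoint_left.2 fun _ hu hu' => hne (hC.eq_of_mem hl hlm hl' hlm' hu hu')

theorem not_reachWithin (hl : 1 ≤ l) (hlm : l ≤ m) (hu : u ∈ C l) (hjl : j < l) :
    ¬ ReachWithin M1 M2 S u j :=
  fun h => (hC.le_of_reachWithin hl hlm hu h).not_gt hjl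

theorem evenUnion_subset : evenUnion m C ⊆ S := fun x hx => by
  obtain ⟨l, ⟨hl, hlm⟩, he, hx⟩ := mem_evenUnion.1 hx
  exact (hC.mem_iff_even hl hlm hx).2 he

theorem notMem_of_mem_oddUnion (hx : x ∈ oddUnion m C) : x ∉ S := by
  obtain ⟨l, ⟨hl, hlm⟩, ho, hx⟩ := mem_oddUnion.1 hx
  rw [hC.mem_iff_even hl hlm hx, Nat.not_even_iff_odd]
  exact ho

theorem symmDiff_augUnion : symmDiff S (AugUnion (m + 1) C) = augment S m C := by
  ext x
  simp only [mem_symmDiff, AugUnion, augment, mem_union, mem_sdiff, mem_biUnion, mem_Icc,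
    mem_evenUnion, mem_oddUnion, Nat.add_sub_cancel]
  constructor
  · rintro (⟨hxS, hx⟩ | ⟨⟨l, hl, hxl⟩, hxS⟩)
    · exact Or.inl ⟨hxS, fun ⟨l, hl, _, hxl⟩ => hx ⟨l, hl, hxl⟩⟩
    · exact Or.inr ⟨l, hl, Nat.not_even_iff_odd.1 fun he => hxS
        ((hC.mem_iff_even hl.1 hl.2 hxl).2 he), hxl⟩
  · rintro (⟨hxS, hx⟩ | ⟨l, hl, ho, hxl⟩)
    · exact Or.inl ⟨hxS, fun ⟨l, hl, hxl⟩ => hx ⟨l, hl, (hC.mem_iff_even hl.1 hl.2 hxl).1 hxS, hxl⟩⟩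
    · exact Or.inr ⟨⟨l, hl, hxl⟩, hC.notMem_of_mem_oddUnion (mem_oddUnion.2 ⟨l, hl, ho, hxl⟩)⟩

theorem card_augment_le {f : ℕ → ℕ}
    (hodd : ∀ l ∈ (Icc 1 m).filter Odd, l = j ∨ ∃ e ∈ (Icc 1 m).filter Even, f e = l)
    (hcard : ∀ e ∈ (Icc 1 m).filter Even, (C (f e)).card ≤ (C e).card) :
    (augment S m C).card ≤ S.card + (C j).card := by
  have hsub : oddUnion m C ⊆ C j ∪ ((Icc 1 m).filter Even).biUnion (fun e => C (f e)) := by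
    intro x hx
    obtain ⟨l, hl, hx⟩ := mem_biUnion.1 hx
    rcases hodd l hl with rfl | ⟨e, he, rfl⟩
    · exact mem_union_left _ hx
    · exact mem_union_right _ (mem_biUnion.2 ⟨e, he, hx⟩)
  have hdisj : ((((Icc 1 m).filter Even) : Finset ℕ) : Set ℕ).PairwiseDisjoint C := by
    intro e he e' he' hne
    simp only [coe_filter, mem_Icc, Set.mem_ofPred_eq] at he he'
    exact hC.disjoint_of_ne he.1.1 he.1.2 he'.1.1 he'.1.2 hne
  have hodd_card : (oddUnion m C).card ≤ (C j).card + (evenUnion m C).card :=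
    calc (oddUnion m C).card
        ≤ (C j).card + (((Icc 1 m).filter Even).biUnion (fun e => C (f e))).card :=
          (card_le_card hsub).trans (card_union_le _ _)
      _ ≤ (C j).card + ∑ e ∈ (Icc 1 m).filter Even, (C (f e)).card := by grw [card_biUnion_le]
      _ ≤ (C j).card + ∑ e ∈ (Icc 1 m).filter Even, (C e).card := by grw [sum_le_sum hcard]
      _ = (C j).card + (evenUnion m C).card := by rw [evenUnion, card_biUnion hdisj]
  have := card_le_card hC.evenUnion_subset
  calc (augment S m C).card ≤ (S \ evenUnion m C).card + (oddUnion m C).card := card_union_le _ _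
    _ ≤ S.card + (C j).card := by rw [card_sdiff_of_subset hC.evenUnion_subset]; omega

theorem piecewise (hD : IsLayered M1 M2 S m D) (P : Finset ℕ) :
    IsLayered M1 M2 S m (P.piecewise D C) := fun l hl hlm u hu => by
  by_cases hP : l ∈ P
  · exact hD l hl hlm u (by rwa [piecewise_eq_of_mem _ _ _ hP] at hu)
  · exact hC l hl hlm u (by rwa [piecewise_eq_of_notMem _ _ _ hP] at hu)

theorem mem_augment_iff_even (hsub : ∀ l, D l ⊆ C l) (hl : 1 ≤ l) (hlm : l ≤ m)
    (hu : u ∈ C l \ D l) : u ∈ augment S m D ↔ Even l := by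
  obtain ⟨hu', huD⟩ := mem_sdiff.1 hu
  have hnot : ∀ l', 1 ≤ l' → l' ≤ m → u ∉ D l' := fun l' h1 h2 h =>
    huD (hC.eq_of_mem h1 h2 hl hlm (hsub l' h) hu' ▸ h)
  rw [← hC.mem_iff_even hl hlm hu']
  simp only [augment, mem_union, mem_sdiff, mem_evenUnion, mem_oddUnion]
  constructor
  · rintro (⟨huS, -⟩ | ⟨l', hl', -, hul'⟩)
    · exact huS
    · exact absurd hul' (hnot l' hl'.1 hl'.2)
  · exact fun huS => Or.inl ⟨huS, fun ⟨l', hl', _, hul'⟩ => hnot l' hl'.1 hl'.2 hul'⟩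

end IsLayered

theorem ExchangePairs.piecewise {M : FinMatroid α} {f : ℕ → ℕ} (hC : ExchangePairs M S m f C)
    (hD : ExchangePairs M S m f D) {P : Finset ℕ}
    (hP : ∀ e, Even e → 2 ≤ e → e < m → (e ∈ P ↔ f e ∈ P)) :
    ExchangePairs M S m f (P.piecewise D C) := fun e he h2 hem => by
  by_cases heP : e ∈ P
  · rw [piecewise_eq_of_mem _ _ _ heP, piecewise_eq_of_mem _ _ _ ((hP e he h2 hem).1 heP)]
    exact hD e he h2 hem
  · rw [piecewise_eq_of_notMem _ _ _ heP,
      piecewise_eq_of_notMem _ _ _ (mt (hP e he h2 hem).2 heP)]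
    exact hC e he h2 hem

/-- Each element of `F l` receives an exchange edge from `F (l - 1)` (or from `s` when `l = 1`). -/
theorem reachWithin_of_exchangePairs (hT1 : M1.Indep T) (hT2 : M2.Indep T) (hm : Odd m)
    (hF : ∀ l, 1 ≤ l → l ≤ m → ∀ u ∈ F l, u ∈ T ↔ Even l) (h1 : M1.Indep (T ∪ F 1))
    (hP1 : ExchangePairs M1 T m (· + 1) F) (hP2 : ExchangePairs M2 T m (· - 1) F) :
    ∀ l, 1 ≤ l → l ≤ m → ∀ u ∈ F l, ReachWithin M1 M2 T u l := by
  intro l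
  induction l using Nat.strong_induction_on with
  | _ l ih =>
  intro hl hlm u hu
  have hprev : 2 ≤ l → ∀ x ∈ F (l - 1), ExchangeEdge M1 M2 T x u → ReachWithin M1 M2 T u l :=
    fun hl2 x hx he => by
      have := (ih (l - 1) (by omega) (by omega) (by omega) x hx).step he
      rwa [Nat.sub_add_cancel hl] at this
  rcases Nat.even_or_odd l with hle | hlo
  · obtain ⟨hcard, hi⟩ := hP2 l hle (by grind) (by grind)
    obtain ⟨x, hx, he⟩ := exists_edge_of_indep_sdiff_union hT2 hu
      (fun x hx => (hF l hl hlm x hx).2 hle)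
      (disjoint_left.2 fun x hx h => by grind [hF (l - 1) (by grind) (by omega) x hx]) hcard.le hi
    exact hprev (by grind) x hx he
  · have huT : u ∉ T := fun h => Nat.not_even_iff_odd.2 hlo ((hF l hl hlm u hu).1 h)
    rcases hl.eq_or_lt with rfl | hl1
    · exact reachWithin_one huT
        (M1.indep_mono h1 (insert_subset (mem_union_right T hu) subset_union_left))
    obtain ⟨-, hi⟩ := hP1 (l - 1) (by grind) (by grind) (by omega)
    simp only [Nat.sub_add_cancel hl] at hi
    rcases indep_insert_or_exists_edge_one hT1 huT sdiff_subset (M1.indep_mono hi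
      (insert_subset (mem_union_right _ hu) subset_union_left)) with h | ⟨x, hx, he⟩
    · exact (reachWithin_one huT h).mono hl
    · exact hprev hl1 x (by simpa using hx : x ∈ T ∧ _).2 he

theorem isAugmentingSet_of_exchangePairs (hm : Odd m) (hL : IsLayered M1 M2 T m F)
    (hcard : ∀ l l', 1 ≤ l → l ≤ m → 1 ≤ l' → l' ≤ m → (F l).card = (F l').card)
    (h1 : M1.Indep (T ∪ F 1)) (hlast : M2.Indep (T ∪ F m))
    (hP1 : ExchangePairs M1 T m (· + 1) F) (hP2 : ExchangePairs M2 T m (· - 1) F) :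
    IsAugmentingSet M1 M2 T (m + 1) F :=
  ⟨fun l hl hlm => hL l hl (by omega),
    fun l l' hl hlm hl' hlm' => hcard l l' hl (by omega) hl' (by omega), h1, hlast,
    fun l hl hlm he => (hP1 l he (by grind) (by simpa using hlm)).2,
    fun l hl hlm ho => by
      simp only [Nat.add_sub_cancel] at hlm
      simpa using (hP2 (l + 1) (by grind) (by omega) (by grind)).2⟩

end Layers

section Distances

open scoped Classical

variable {M1 M2 : FinMatroid α} {S : Finset α} {m j : ℕ} {a b w x : α} {C D D' : ℕ → Finset α}

/-- The even layers beyond distance `j` form an exchange chain, ordered from `s`. -/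
theorem IsLayered.spans_augment_one (hC : IsLayered M1 M2 S m C) (hS1 : M1.Indep S) (hm : Odd m)
    (hP : ExchangePairs M1 S m (· + 1) C) (hx : x ∈ S) (hxj : ¬ ReachWithin M1 M2 S x j) :
    M1.Spans ((augment S m C).filter (¬ ReachWithin M1 M2 S · j)) x := by
  by_cases hxT : x ∈ augment S m C
  · exact M1.spans_of_mem (mem_filter.2 ⟨hxT, hxj⟩)
  obtain ⟨e, ⟨he1, hem⟩, he, hxe⟩ := exists_mem_of_notMem_augment hx hxT
  have hej : j < e := not_le.1 fun h => hxj ((hC.reachWithin he1 hem hxe).mono h)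
  refine M1.spans_of_exchange_chain (· < ·) (S := S.filter (¬ ReachWithin M1 M2 S · j))
    (I := ((Icc 1 m).filter Even).filter (j < ·)) (A := C) (B := fun e => C (e + 1))
    (M1.indep_mono hS1 (filter_subset _ S)) ?_ ?_ ?_ ?_ ?_ ?_ ?_
    (filter_sdiff_biUnion_subset_augment fun l hl1 hlm hl hlI u hu =>
      not_not.2 ((hC.reachWithin hl1 hlm hu).mono (by simpa [hl1, hlm, hl] using hlI)))
    e (by simp [*]) x hxe
  all_goals simp only [mem_filter, mem_Icc, and_imp]
  · intro i hi1 him hi hji u hu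
    exact mem_filter.2 ⟨(hC.mem_iff_even hi1 him hu).2 hi, hC.not_reachWithin hi1 him hu hji⟩
  · rintro i hi1 him - - i' hi'1 hi'm - - hlt
    exact hC.disjoint_of_ne hi1 him hi'1 hi'm (by omega)
  · rintro i hi1 him hi -
    refine disjoint_left.2 fun u hu hu' => ?_
    have := (hC.mem_iff_even (by omega) (by grind) hu).1 (mem_filter.1 hu').1
    exact Nat.not_even_iff_odd.2 hi.add_one this
  · rintro i hi1 him hi -
    exact (hP i hi (by grind) (by grind)).1.le
  · rintro i hi1 him hi -
    exact M1.indep_mono (hP i hi (by grind) (by grind)).2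
      (union_subset_union (sdiff_subset_sdiff (filter_subset _ S) subset_rfl) subset_rfl)
  · intro i hi1 him hi hji y hy
    refine spans_of_not_reachWithin (M2 := M2) (j := i - 1) hS1 ?_
      (hC.not_reachWithin (by omega) (by grind) hy (by grind))
      (sdiff_subset.trans (filter_subset _ S)) fun z hz => ?_
    · rw [hC.mem_iff_even (by omega) (by grind) hy, Nat.even_add_one, not_not]
      exact hi
    · simp only [mem_sdiff, mem_filter, mem_biUnion, mem_Icc, not_and, not_not] at hz
      by_cases hzj : ReachWithin M1 M2 S z j
      · exact hzj.mono (by omega)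
      · obtain ⟨i', ⟨⟨⟨⟨hi'1, hi'm⟩, -⟩, -⟩, hi'i⟩, hz⟩ := hz.2 ⟨hz.1, hzj⟩
        exact (hC.reachWithin hi'1 hi'm hz).mono (by omega)
  · intro i hi1 him hi hji u hu
    exact mem_filter.2 ⟨mem_augment_of_odd (by omega) (by grind) hu hi.add_one,
      hC.not_reachWithin (by omega) (by grind) hu (by omega)⟩

/-- The even layers up to distance `j` form an exchange chain, ordered from `t`. -/
theorem IsLayered.spans_augment_two (hC : IsLayered M1 M2 S m C) (hS2 : M2.Indep S)
    (hdt : IsDistST M1 M2 S (m + 1)) (hm : Odd m) (hP : ExchangePairs M2 S m (· - 1) C)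
    (hx : x ∈ S) (hxj : ReachWithin M1 M2 S x j) :
    M2.Spans ((augment S m C).filter (ReachWithin M1 M2 S · j)) x := by
  by_cases hxT : x ∈ augment S m C
  · exact M2.spans_of_mem (mem_filter.2 ⟨hxT, hxj⟩)
  obtain ⟨e, ⟨he1, hem⟩, he, hxe⟩ := exists_mem_of_notMem_augment hx hxT
  refine M2.spans_of_exchange_chain (· > ·) (S := S.filter (ReachWithin M1 M2 S · j))
    (I := ((Icc 1 m).filter Even).filter (· ≤ j)) (A := C) (B := fun e => C (e - 1))
    (M2.indep_mono hS2 (filter_subset _ S)) ?_ ?_ ?_ ?_ ?_ ?_ ?_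
    (filter_sdiff_biUnion_subset_augment fun l hl1 hlm hl hlI u hu =>
      hC.not_reachWithin hl1 hlm hu (by simpa [hl1, hlm, hl] using hlI))
    e (by simp [*, hC.le_of_reachWithin he1 hem hxe hxj]) x hxe
  all_goals simp only [mem_filter, mem_Icc, and_imp]
  · intro i hi1 him hi hij u hu
    exact mem_filter.2 ⟨(hC.mem_iff_even hi1 him hu).2 hi, (hC.reachWithin hi1 him hu).mono hij⟩
  · rintro i hi1 him - - i' hi'1 hi'm - - hlt
    exact hC.disjoint_of_ne hi1 him hi'1 hi'm (by omega)
  · rintro i hi1 him hi -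
    refine disjoint_left.2 fun u hu hu' => ?_
    have := (hC.mem_iff_even (by grind) (by omega) hu).1 (mem_filter.1 hu').1
    grind
  · rintro i hi1 him hi -
    exact (hP i hi (by grind) (by grind)).1.le
  · rintro i hi1 him hi -
    exact M2.indep_mono (hP i hi (by grind) (by grind)).2
      (union_subset_union (sdiff_subset_sdiff (filter_subset _ S) subset_rfl) subset_rfl)
  · intro i hi1 him hi hij y hy
    have hi2 : 2 ≤ i := by grind
    refine spans_of_reachWithin (j := i - 1) hS2 hdt ?_ (hC.reachWithin (by omega) (by omega) hy)
      (by grind) (sdiff_subset.trans (filter_subset _ S)) fun z hz => ?_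
    · rw [hC.mem_iff_even (by omega) (by omega) hy]
      grind
    · simp only [mem_sdiff, mem_filter, mem_biUnion, mem_Icc, not_and, not_not] at hz
      by_cases hzj : ReachWithin M1 M2 S z j
      · obtain ⟨i', ⟨⟨⟨⟨hi'1, hi'm⟩, -⟩, -⟩, hii'⟩, hz⟩ := hz.2 ⟨hz.1, hzj⟩
        exact hC.not_reachWithin hi'1 hi'm hz (by omega)
      · exact fun h => hzj (h.mono (by omega))
  · intro i hi1 him hi hij u hu
    exact mem_filter.2 ⟨mem_augment_of_odd (by grind) (by omega) hu (by grind),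
      (hC.reachWithin (by grind) (by omega) hu).mono (by omega)⟩

theorem IsLayered.indep_augment_one (hC : IsLayered M1 M2 S m C) (hS1 : M1.Indep S) (hm : Odd m)
    (hP : ExchangePairs M1 S m (· + 1) C) (h1 : M1.Indep (S ∪ C 1)) :
    M1.Indep (augment S m C) := by
  refine h1.indep_of_spans_of_card_le (fun x hx => ?_) ?_
  · rcases mem_union.1 hx with hx | hx
    · exact (hC.spans_augment_one hS1 hm hP hx not_reachWithin_zero).mono (filter_subset _ _)
    · exact M1.spans_of_mem (mem_augment_of_odd le_rfl hm.pos hx odd_one)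
  · rw [card_union_of_disjoint (disjoint_left.2 fun u huS hu =>
      Nat.not_even_iff_odd.2 odd_one ((hC.mem_iff_even le_rfl hm.pos hu).1 huS))]
    refine hC.card_augment_le (f := (· + 1)) (fun l hl => ?_) fun e he => ?_ <;>
      simp only [mem_filter, mem_Icc] at *
    · rcases hl.1.1.eq_or_lt with h | h
      · exact Or.inl h.symm
      · exact Or.inr ⟨l - 1, by grind⟩
    · exact (hP e he.2 (by grind) (by grind)).1.ge

theorem IsLayered.indep_augment_two (hC : IsLayered M1 M2 S m C) (hS2 : M2.Indep S)
    (hdt : IsDistST M1 M2 S (m + 1)) (hm : Odd m) (hP : ExchangePairs M2 S m (· - 1) C)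
    (hlast : M2.Indep (S ∪ C m)) : M2.Indep (augment S m C) := by
  refine hlast.indep_of_spans_of_card_le (fun x hx => ?_) ?_
  · rcases mem_union.1 hx with hx | hx
    · by_cases hxT : x ∈ augment S m C
      · exact M2.spans_of_mem hxT
      obtain ⟨e, ⟨he1, hem⟩, -, hxe⟩ := exists_mem_of_notMem_augment hx hxT
      exact (hC.spans_augment_two hS2 hdt hm hP hx (hC.reachWithin he1 hem hxe)).mono
        (filter_subset _ _)
    · exact M2.spans_of_mem (mem_augment_of_odd hm.pos le_rfl hx hm)
  · rw [card_union_of_disjoint (disjoint_left.2 fun u huS hu =>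
      Nat.not_even_iff_odd.2 hm ((hC.mem_iff_even hm.pos le_rfl hu).1 huS))]
    refine hC.card_augment_le (f := (· - 1)) (fun l hl => ?_) fun e he => ?_ <;>
      simp only [mem_filter, mem_Icc] at *
    · rcases hl.1.2.eq_or_lt with h | h
      · exact Or.inl h
      · exact Or.inr ⟨l + 1, by grind⟩
    · exact (hP e he.2 (by grind) (by grind)).1.ge

namespace IsAugmentingSet

theorem isLayered (hD : IsAugmentingSet M1 M2 S (m + 1) D) : IsLayered M1 M2 S m D :=
  fun l hl hlm => hD.1 l hl (by omega)

theorem exchangePairs_one (hD : IsAugmentingSet M1 M2 S (m + 1) D) :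
    ExchangePairs M1 S m (· + 1) D := fun e he h2 hem =>
  ⟨hD.2.1 e (e + 1) (by omega) (by omega) (by omega) (by omega),
    hD.2.2.2.2.1 e (by omega) (by simpa using hem) he⟩

theorem exchangePairs_two (hD : IsAugmentingSet M1 M2 S (m + 1) D) :
    ExchangePairs M2 S m (· - 1) D := fun e he h2 hem => by
  refine ⟨hD.2.1 e (e - 1) (by omega) (by omega) (by omega) (by omega), ?_⟩
  have := hD.2.2.2.2.2 (e - 1) (by omega) (by simp; omega) (by grind)
  rwa [Nat.sub_add_cancel (by omega)] at this

theorem indep_augment_one (hD : IsAugmentingSet M1 M2 S (m + 1) D) (hS1 : M1.Indep S)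
    (hm : Odd m) : M1.Indep (augment S m D) :=
  hD.isLayered.indep_augment_one hS1 hm hD.exchangePairs_one hD.2.2.1

theorem indep_augment_two (hD : IsAugmentingSet M1 M2 S (m + 1) D) (hS2 : M2.Indep S)
    (hdt : IsDistST M1 M2 S (m + 1)) (hm : Odd m) : M2.Indep (augment S m D) :=
  hD.isLayered.indep_augment_two hS2 hdt hm hD.exchangePairs_two hD.2.2.2.1

/-- Applies to the `M1`-edges `v → w` of `G(S ⊕ D)` with `d(s, v) ≤ j` in `G(S)` and, for
`j = 0`, to the edges `s → w`. -/
theorem reachWithin_succ_of_indep_insert (hD : IsAugmentingSet M1 M2 S (m + 1) D)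
    (hS1 : M1.Indep S) (hm : Odd m) (hw : w ∉ augment S m D)
    (hi : M1.Indep (insert w ((augment S m D).filter (¬ ReachWithin M1 M2 S · j)))) :
    ReachWithin M1 M2 S w (j + 1) := by
  by_contra hw'
  have hspan : ∀ x ∈ S, ¬ ReachWithin M1 M2 S x j →
      M1.Spans ((augment S m D).filter (¬ ReachWithin M1 M2 S · j)) x :=
    fun x hx => hD.isLayered.spans_augment_one hS1 hm hD.exchangePairs_one hx
  suffices hX : M1.Spans ((augment S m D).filter (¬ ReachWithin M1 M2 S · j)) w from
    hX.not_indep_insert (M1.indep_mono (hD.indep_augment_one hS1 hm) (filter_subset _ _))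
      (fun h => hw (mem_filter.1 h).1) hi
  by_cases hwS : w ∈ S
  · exact hspan w hwS fun h => hw' (h.mono j.le_succ)
  · refine (spans_of_not_reachWithin hS1 hwS hw' (filter_subset (¬ ReachWithin M1 M2 S · j) S)
      fun x hx => ?_).trans fun x hx => hspan x (mem_filter.1 hx).1 (mem_filter.1 hx).2
    exact not_not.1 fun h => (mem_sdiff.1 hx).2 (mem_filter.2 ⟨(mem_sdiff.1 hx).1, h⟩)

theorem reachWithin_succ_of_indep_insert_erase (hD : IsAugmentingSet M1 M2 S (m + 1) D)
    (hS2 : M2.Indep S) (hdt : IsDistST M1 M2 S (m + 1)) (hm : Odd m) (ha : a ∉ augment S m D)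
    (ha' : ReachWithin M1 M2 S a j) (hj : j < m)
    (hi : M2.Indep (insert a ((augment S m D).erase b))) : ReachWithin M1 M2 S b (j + 1) := by
  by_contra hb'
  have hspan : ∀ x ∈ S, ReachWithin M1 M2 S x (j + 1) →
      M2.Spans ((augment S m D).filter (ReachWithin M1 M2 S · (j + 1))) x :=
    fun x hx => hD.isLayered.spans_augment_two hS2 hdt hm hD.exchangePairs_two hx
  have hsub : (augment S m D).filter (ReachWithin M1 M2 S · (j + 1)) ⊆ (augment S m D).erase b :=
    fun x hx => mem_erase.2 ⟨fun h => hb' (h ▸ (mem_filter.1 hx).2), (mem_filter.1 hx).1⟩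
  suffices hX : M2.Spans ((augment S m D).filter (ReachWithin M1 M2 S · (j + 1))) a from
    (hX.mono hsub).not_indep_insert (M2.indep_mono (hD.indep_augment_two hS2 hdt hm)
      (erase_subset _ _)) (fun h => ha (mem_of_mem_erase h)) hi
  by_cases haS : a ∈ S
  · exact hspan a haS (ha'.mono j.le_succ)
  · refine (spans_of_reachWithin hS2 hdt haS ha' (by omega)
      (filter_subset (ReachWithin M1 M2 S · (j + 1)) S) fun x hx => ?_).trans
      fun x hx => hspan x (mem_filter.1 hx).1 (mem_filter.1 hx).2
    exact fun h => (mem_sdiff.1 hx).2 (mem_filter.2 ⟨(mem_sdiff.1 hx).1, h⟩)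

theorem reachWithin_of_reachWithin_augment (hD : IsAugmentingSet M1 M2 S (m + 1) D)
    (hS1 : M1.Indep S) (hS2 : M2.Indep S) (hdt : IsDistST M1 M2 S (m + 1)) (hm : Odd m) :
    ∀ {n u}, ReachWithin M1 M2 (augment S m D) u n → ReachWithin M1 M2 S u n ∨ m < n := by
  intro n
  induction n with
  | zero => exact fun h => absurd h not_reachWithin_zero
  | succ n ih =>
    intro u hu
    rcases hu.cases with ⟨huT, hi⟩ | ⟨v, hv, he⟩
    · refine Or.inl ((hD.reachWithin_succ_of_indep_insert hS1 hm huT (j := 0)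
        (M1.indep_mono hi (insert_subset_insert u (filter_subset _ _)))).mono (by omega))
    rcases ih hv with hv | hmn
    · rcases he with ⟨hvT, huT, hi⟩ | ⟨hvT, huT, hi⟩
      · refine Or.inl (hD.reachWithin_succ_of_indep_insert hS1 hm huT (M1.indep_mono hi
          (insert_subset_insert u fun x hx => mem_erase.2 ⟨?_, (mem_filter.1 hx).1⟩)))
        rintro rfl
        exact (mem_filter.1 hx).2 hv
      · by_cases hnm : n < m
        · exact Or.inl (hD.reachWithin_succ_of_indep_insert_erase hS2 hdt hm hvT hv hnm hi)
        · exact Or.inr (by omega)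
    · exact Or.inr (by omega)

section Difference

variable (hD : IsAugmentingSet M1 M2 S (m + 1) D) (hD' : IsAugmentingSet M1 M2 S (m + 1) D')
  (hsub : ∀ l, D l ⊆ D' l)
include hD hD' hsub

theorem indep_sdiff_union_one (hS1 : M1.Indep S) (hm : Odd m) {P : Finset ℕ} {X : Finset α}
    {b : ℕ} (hP : ∀ e, Even e → 2 ≤ e → e < m → (e ∈ P ↔ e + 1 ∈ P))
    (hX : ∀ l ∈ P, Even l → D' l \ D l ⊆ X) (hb : b ∈ P) (hb1 : 1 ≤ b) (hbm : b ≤ m)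
    (hbo : Odd b) : M1.Indep ((augment S m D \ X) ∪ (D' b \ D b)) := by
  refine M1.indep_mono ((hD.isLayered.piecewise hD'.isLayered P).indep_augment_one hS1 hm
    (hD.exchangePairs_one.piecewise hD'.exchangePairs_one hP) ?_)
    (augment_sdiff_union_subset hsub hX hb hb1 hbm hbo)
  by_cases h : 1 ∈ P
  · simpa [h] using hD'.2.2.1
  · simpa [h] using hD.2.2.1

theorem indep_sdiff_union_two (hS2 : M2.Indep S) (hdt : IsDistST M1 M2 S (m + 1)) (hm : Odd m)
    {P : Finset ℕ} {X : Finset α} {b : ℕ} (hP : ∀ e, Even e → 2 ≤ e → e < m → (e ∈ P ↔ e - 1 ∈ P))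
    (hX : ∀ l ∈ P, Even l → D' l \ D l ⊆ X) (hb : b ∈ P) (hb1 : 1 ≤ b) (hbm : b ≤ m)
    (hbo : Odd b) : M2.Indep ((augment S m D \ X) ∪ (D' b \ D b)) := by
  refine M2.indep_mono ((hD.isLayered.piecewise hD'.isLayered P).indep_augment_two hS2 hdt hm
    (hD.exchangePairs_two.piecewise hD'.exchangePairs_two hP) ?_)
    (augment_sdiff_union_subset hsub hX hb hb1 hbm hbo)
  by_cases h : m ∈ P
  · simpa [h] using hD'.2.2.2.1
  · simpa [h] using hD.2.2.2.1

theorem card_sdiff_eq {l l' : ℕ} (hl : 1 ≤ l) (hlm : l ≤ m) (hl' : 1 ≤ l') (hlm' : l' ≤ m) :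
    (D' l \ D l).card = (D' l' \ D l').card := by
  rw [card_sdiff_of_subset (hsub l), card_sdiff_of_subset (hsub l'),
    hD.2.1 l l' hl (by omega) hl' (by omega), hD'.2.1 l l' hl (by omega) hl' (by omega)]

theorem exchangePairs_sdiff_one (hS1 : M1.Indep S) (hm : Odd m) :
    ExchangePairs M1 (augment S m D) m (· + 1) (fun l => D' l \ D l) := fun e he h2 hem =>
  ⟨hD.card_sdiff_eq hD' hsub (l' := e + 1) (by omega) (by omega) (by omega) (by grind),
    hD.indep_sdiff_union_one hD' hsub hS1 hm (P := {e, e + 1}) (X := D' e \ D e) (b := e + 1)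
      (by simp; grind) (by simp; grind) (by simp) (by omega) (by grind) he.add_one⟩

theorem exchangePairs_sdiff_two (hS2 : M2.Indep S) (hdt : IsDistST M1 M2 S (m + 1))
    (hm : Odd m) : ExchangePairs M2 (augment S m D) m (· - 1) (fun l => D' l \ D l) :=
  fun e he h2 hem =>
    ⟨hD.card_sdiff_eq hD' hsub (l' := e - 1) (by omega) (by omega) (by omega) (by omega),
    hD.indep_sdiff_union_two hD' hsub hS2 hdt hm (P := {e, e - 1}) (X := D' e \ D e)
      (b := e - 1) (by simp; grind) (by simp; grind) (by simp) (by omega) (by omega) (by grind)⟩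

theorem indep_augment_union_sdiff_one (hS1 : M1.Indep S) (hm : Odd m) :
    M1.Indep (augment S m D ∪ (D' 1 \ D 1)) := by
  simpa using hD.indep_sdiff_union_one hD' hsub hS1 hm (P := {1}) (X := ∅) (by simp; omega)
    (by simp) (mem_singleton_self 1) le_rfl hm.pos odd_one

theorem indep_augment_union_sdiff_two (hS2 : M2.Indep S) (hdt : IsDistST M1 M2 S (m + 1))
    (hm : Odd m) : M2.Indep (augment S m D ∪ (D' m \ D m)) := by
  simpa using hD.indep_sdiff_union_two hD' hsub hS2 hdt hm (P := {m}) (X := ∅) (by simp; omega)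
    (by simp; grind) (mem_singleton_self m) hm.pos le_rfl hm

end Difference

end IsAugmentingSet

end Distances

theorem aug_set_difference_general (M1 M2 : FinMatroid α)
    (S : Finset α) (hS1 : M1.Indep S) (hS2 : M2.Indep S)
    (dt : ℕ) (hdt : IsDistST M1 M2 S dt)
    (D D' : ℕ → Finset α)
    (hD : IsAugmentingSet M1 M2 S dt D) (hD' : IsAugmentingSet M1 M2 S dt D')
    (hsub : ∀ l, D l ⊆ D' l) :
    IsAugmentingSet M1 M2 (symmDiff S (AugUnion dt D)) dt
      (fun l => D' l \ D l) := by
  obtain ⟨m, rfl, hm⟩ := hdt.exists_odd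
  rw [hD.isLayered.symmDiff_augUnion]
  have hP1 := hD.exchangePairs_sdiff_one hD' hsub hS1 hm
  have hP2 := hD.exchangePairs_sdiff_two hD' hsub hS2 hdt hm
  have h1 := hD.indep_augment_union_sdiff_one hD' hsub hS1 hm
  have hreach := reachWithin_of_exchangePairs (hD.indep_augment_one hS1 hm)
    (hD.indep_augment_two hS2 hdt hm) hm
    (fun l hl hlm u hu => hD'.isLayered.mem_augment_iff_even hsub hl hlm hu) h1 hP1 hP2
  refine isAugmentingSet_of_exchangePairs hm (fun l hl hlm u hu => inLayer_iff.2
    ⟨hreach l hl hlm u hu, fun n hn => ?_⟩) (fun l l' => hD.card_sdiff_eq hD' hsub) h1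
    (hD.indep_augment_union_sdiff_two hD' hsub hS2 hdt hm) hP1 hP2
  rcases hD.reachWithin_of_reachWithin_augment hS1 hS2 hdt hm hn with h | h
  · exact hD'.isLayered.le_of_reachWithin hl hlm (mem_sdiff.1 hu).1 h
  · omega

/-- For augmenting sets `Π ⊆ Π'` in `G(S)`, the componentwise difference
`Π' \ Π` is an augmenting set in `G(S ⊕ Π)` (CLSSW, Theorem 33). -/
theorem aug_set_difference (M1 M2 : FinMatroid α) (hE : M1.E = M2.E)
    (S : Finset α) (hS1 : M1.Indep S) (hS2 : M2.Indep S)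
    (dt : ℕ) (hdt : IsDistST M1 M2 S dt)
    (D D' : ℕ → Finset α)
    (hD : IsAugmentingSet M1 M2 S dt D) (hD' : IsAugmentingSet M1 M2 S dt D')
    (hsub : ∀ l, D l ⊆ D' l) :
    IsAugmentingSet M1 M2 (symmDiff S (AugUnion dt D)) dt
      (fun l => D' l \ D l) :=
  aug_set_difference_general M1 M2 S hS1 hS2 dt hdt D D' hD hD' hsub
end
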